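/- arXiv:0804.1783 — 3 statements merged into one kernel-verified Lean document; each statement's English description precedes it below -/
import Mathlib

section
/- Let X be a Banach space, A0 : X → X a bounded linear operator such that exp(t·A0) is an isometry of X for every t ∈ ℝ, and A1 : ℝ → B(X) a map that is continuous in operator norm at 0. Then for every s0 > 0, sup_{s ∈ [0,s0]} ‖ exp((s/ε)(A0 + ε·A1(ε))) − exp((s/ε)(A0 + ε·A1(0))) ‖ → 0 as ε → 0 (ε ≠ 0), where ‖·‖ is the operator norm on B(X). -/
/-!
Write `B = A0 + D`, `C = A0 + D'`. Since `exp (-u A0)` is an isometry, Grönwall applied to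
`exp (-u A0) exp (u B)`, whose derivative is `exp (-u A0) D exp (u B)`, gives
`‖exp (u B)‖ ≤ exp (‖D‖ u)` for `u ≥ 0`. Differentiating `u ↦ exp ((t - u) B) exp (u C)` (Duhamel)
then bounds `‖exp (t B) - exp (t C)‖` by `t ‖D - D'‖ exp ((‖D‖ + ‖D'‖) t)`. For
`D = ε A1(ε)`, `D' = ε A1(0)` and `t = s / ε` the factors of `ε` cancel, leaving
`s ‖A1(ε) - A1(0)‖ exp (s (‖A1(ε)‖ + ‖A1(0)‖))`, which tends to `0` uniformly in `s ∈ [0, s0]`.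
Negative `ε` reduce to positive ones by replacing `A0` with `-A0`.
-/

open Filter Topology NormedSpace

section Duhamel

variable {𝔸 : Type*} [NormedRing 𝔸] [NormedAlgebra ℝ 𝔸] [CompleteSpace 𝔸]

theorem hasDerivAt_exp_sub_smul_mul_exp_smul (B C : 𝔸) (a u : ℝ) :
    HasDerivAt (fun u : ℝ => exp ((a - u) • B) * exp (u • C))
      (exp ((a - u) • B) * (C - B) * exp (u • C)) u := by
  have hB : HasDerivAt (fun u : ℝ => exp ((a - u) • B)) (-(exp ((a - u) • B) * B)) u := by
    simpa [Function.comp_def] using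
      (hasDerivAt_exp_smul_const B (a - u)).scomp u ((hasDerivAt_id u).const_sub a)
  convert hB.fun_mul (hasDerivAt_exp_smul_const' C u) using 1
  noncomm_ring

theorem norm_exp_smul_sub_exp_smul_le {B C : 𝔸} {ω t : ℝ} (ht : 0 ≤ t)
    (hB : ∀ u ∈ Set.Icc 0 t, ‖exp (u • B)‖ ≤ Real.exp (ω * u))
    (hC : ∀ u ∈ Set.Icc 0 t, ‖exp (u • C)‖ ≤ Real.exp (ω * u)) :
    ‖exp (t • B) - exp (t • C)‖ ≤ ‖B - C‖ * t * Real.exp (ω * t) := by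
  have hderiv := fun u => hasDerivAt_exp_sub_smul_mul_exp_smul B C t u
  have bound : ∀ u ∈ Set.Ico 0 t,
      ‖exp ((t - u) • B) * (C - B) * exp (u • C)‖ ≤ ‖B - C‖ * Real.exp (ω * t) := by
    intro u ⟨hu0, hut⟩
    calc ‖exp ((t - u) • B) * (C - B) * exp (u • C)‖
        ≤ Real.exp (ω * (t - u)) * ‖B - C‖ * Real.exp (ω * u) := by
          grw [norm_mul_le, norm_mul_le, hB (t - u) ⟨by linarith, by linarith⟩,
            hC u ⟨hu0, hut.le⟩, norm_sub_rev]
      _ = ‖B - C‖ * Real.exp (ω * t) := by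
          rw [mul_right_comm, ← Real.exp_add]; ring_nf
  have := norm_image_sub_le_of_norm_deriv_le_segment'
    (fun u _ => (hderiv u).hasDerivWithinAt) bound t ⟨ht, le_rfl⟩
  simpa [norm_sub_rev, mul_right_comm] using this

end Duhamel

section Isometric

variable {X : Type*} [NormedAddCommGroup X] [NormedSpace ℝ X] [CompleteSpace X]
  {A0 : X →L[ℝ] X}

theorem norm_exp_smul_add_le (hiso : ∀ (t : ℝ) (x : X), ‖exp (t • A0) x‖ = ‖x‖)
    (D : X →L[ℝ] X) {t : ℝ} (ht : 0 ≤ t) :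
    ‖exp (t • (A0 + D))‖ ≤ Real.exp (‖D‖ * t) := by
  have hnorm : ∀ (u : ℝ) (T : X →L[ℝ] X), ‖exp ((0 - u) • A0) * T‖ = ‖T‖ :=
    fun u T => (exp ((0 - u) • A0) * T).opNorm_ext T fun x => hiso _ (T x)
  have hderiv := fun u => hasDerivAt_exp_sub_smul_mul_exp_smul A0 (A0 + D) 0 u
  have := norm_le_gronwallBound_of_norm_deriv_right_le (δ := 1) (K := ‖D‖) (ε := 0)
    (fun u _ => (hderiv u).continuousAt.continuousWithinAt)
    (fun u _ => (hderiv u).hasDerivWithinAt)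
    (by simp only [sub_self, zero_smul, exp_zero, mul_one]; exact ContinuousLinearMap.norm_id_le)
    (fun u _ => by
      rw [mul_assoc, hnorm, hnorm, add_sub_cancel_left, add_zero]
      exact norm_mul_le _ _) t ⟨ht, le_rfl⟩
  rwa [hnorm, gronwallBound_ε0, sub_zero, one_mul] at this

theorem norm_exp_smul_add_sub_exp_smul_add_le_of_nonneg
    (hiso : ∀ (t : ℝ) (x : X), ‖exp (t • A0) x‖ = ‖x‖) (D D' : X →L[ℝ] X) {t : ℝ} (ht : 0 ≤ t) :
    ‖exp (t • (A0 + D)) - exp (t • (A0 + D'))‖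
      ≤ ‖D - D'‖ * t * Real.exp ((‖D‖ + ‖D'‖) * t) := by
  have growth : ∀ E : X →L[ℝ] X, ‖E‖ ≤ ‖D‖ + ‖D'‖ →
      ∀ u ∈ Set.Icc 0 t, ‖exp (u • (A0 + E))‖ ≤ Real.exp ((‖D‖ + ‖D'‖) * u) :=
    fun E hE u hu => (norm_exp_smul_add_le hiso E hu.1).trans (by gcongr; exact hu.1)
  simpa using norm_exp_smul_sub_exp_smul_le (𝔸 := X →L[ℝ] X) ht
    (growth D (by simp)) (growth D' (by simp))

theorem norm_exp_smul_add_sub_exp_smul_add_le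
    (hiso : ∀ (t : ℝ) (x : X), ‖exp (t • A0) x‖ = ‖x‖) (D D' : X →L[ℝ] X) (t : ℝ) :
    ‖exp (t • (A0 + D)) - exp (t • (A0 + D'))‖
      ≤ ‖D - D'‖ * |t| * Real.exp ((‖D‖ + ‖D'‖) * |t|) := by
  rcases le_total 0 t with ht | ht
  · rw [abs_of_nonneg ht]
    exact norm_exp_smul_add_sub_exp_smul_add_le_of_nonneg hiso D D' ht
  · have hiso_neg : ∀ (t : ℝ) (x : X), ‖exp (t • -A0) x‖ = ‖x‖ := fun t => by
      simpa using hiso (-t)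
    have hflip : ∀ E : X →L[ℝ] X, t • (A0 + E) = (-t) • (-A0 + -E) := fun E => by module
    rw [abs_of_nonpos ht, hflip, hflip]
    simpa only [norm_neg, neg_sub_neg, norm_sub_rev D'] using
      norm_exp_smul_add_sub_exp_smul_add_le_of_nonneg hiso_neg (-D) (-D') (neg_nonneg.2 ht)

end Isometric

/-- **Duhamel comparison step for the weak coupling limit.**
Let `X` be a Banach space, `A0` a bounded operator whose exponentials are isometries, and
`A1 : ℝ → B(X)` norm-continuous at `0`.  Then for every `s0 > 0`,
`sup_{s ∈ [0,s0]} ‖exp ((s/ε)(A0 + ε A1(ε))) − exp ((s/ε)(A0 + ε A1(0)))‖ → 0`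
as `ε → 0`, `ε ≠ 0` (operator norm). -/
theorem duhamel_comparison_weak_coupling
    {X : Type*} [NormedAddCommGroup X] [NormedSpace ℝ X] [CompleteSpace X]
    (A0 : X →L[ℝ] X)
    (hiso : ∀ (t : ℝ) (x : X), ‖exp (t • A0) x‖ = ‖x‖)
    (A1 : ℝ → X →L[ℝ] X) (hA1 : ContinuousAt A1 0)
    (s0 : ℝ) (hs0 : 0 < s0) :
    Tendsto (fun ε : ℝ =>
        ⨆ s : Set.Icc (0:ℝ) s0,
          ‖exp (((s : ℝ) / ε) • (A0 + ε • A1 ε))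
              - exp (((s : ℝ) / ε) • (A0 + ε • A1 0))‖)
      (𝓝[≠] (0 : ℝ)) (𝓝 0) := by
  set M : ℝ → ℝ := fun ε => ‖A1 ε - A1 0‖ * s0 * Real.exp ((‖A1 ε‖ + ‖A1 0‖) * s0)
  have hM : Tendsto M (𝓝[≠] 0) (𝓝 0) := by
    have : ContinuousAt M 0 := by fun_prop
    simpa [M] using this.tendsto.mono_left nhdsWithin_le_nhds
  have hbound : ∀ ε ≠ 0, ∀ s : Set.Icc (0:ℝ) s0,
      ‖exp (((s : ℝ) / ε) • (A0 + ε • A1 ε)) - exp (((s : ℝ) / ε) • (A0 + ε • A1 0))‖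
        ≤ M ε := by
    rintro ε hε ⟨s, hs, hss0⟩
    calc _ ≤ ‖ε • A1 ε - ε • A1 0‖ * |s / ε|
            * Real.exp ((‖ε • A1 ε‖ + ‖ε • A1 0‖) * |s / ε|) :=
          norm_exp_smul_add_sub_exp_smul_add_le hiso _ _ _
      _ = ‖A1 ε - A1 0‖ * s * Real.exp ((‖A1 ε‖ + ‖A1 0‖) * s) := by
          rw [← smul_sub]
          simp only [norm_smul, Real.norm_eq_abs, abs_div, abs_of_nonneg hs]
          field_simp
      _ ≤ M ε := by simp only [M]; gcongr
  refine squeeze_zero' (Eventually.of_forall fun ε => Real.iSup_nonneg fun s => norm_nonneg _)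
    ?_ hM
  filter_upwards [self_mem_nhdsWithin] with ε hε
  exact Real.iSup_le (hbound ε hε) (by positivity)
end

section
/- In the finite-dimensional repeated interaction setup, assume Hypothesis (H1). Then T(−λ,τ) = T(λ,τ) for every λ ∈ ℝ and τ > 0; i.e., λ ↦ T(λ,τ) is an even function of λ. -/
open Filter Topology NormedSpace
open scoped Kronecker Matrix.Norms.L2Operator Matrix ComplexOrder

set_option synthInstance.maxHeartbeats 1000000
set_option maxHeartbeats 1000000

noncomputable section

/-- The norm topology on continuous linear endomorphisms of a matrix space is a ring
topology.  (This is definitionally the instance coming from the seminormed ring structure;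
we register it locally to help instance resolution.) -/
local instance clmTopologicalRing {N : Type*} [Fintype N] [DecidableEq N] :
    IsTopologicalRing (Matrix N N ℂ →L[ℂ] Matrix N N ℂ) :=
  NonUnitalSeminormedRing.toIsTopologicalRing (α := Matrix N N ℂ →L[ℂ] Matrix N N ℂ)

/-- The Gibbs state at inverse temperature `β` associated with the hamiltonian `hE`. -/
def gibbsState {m : ℕ} (β : ℝ) (hE : Matrix (Fin m) (Fin m) ℂ)
    (y : Matrix (Fin m) (Fin m) ℂ) : ℂ :=
  (exp ((-β : ℂ) • hE) * y).trace / (exp ((-β : ℂ) • hE)).trace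

/-- The commutator `ad_a = [a, ·]` as a continuous linear map on a matrix space. -/
def adC {N : Type*} [Fintype N] [DecidableEq N] (a : Matrix N N ℂ) :
    Matrix N N ℂ →L[ℂ] Matrix N N ℂ :=
  LinearMap.toContinuousLinearMap (LinearMap.mulLeft ℂ a - LinearMap.mulRight ℂ a)

/-- The embedding `x ↦ x ⊗ 1` of the small system into the full system. -/
def inclS (n m : ℕ) :
    Matrix (Fin n) (Fin n) ℂ →L[ℂ] Matrix (Fin n × Fin m) (Fin n × Fin m) ℂ :=
  LinearMap.toContinuousLinearMap
    { toFun := fun x => x ⊗ₖ (1 : Matrix (Fin m) (Fin m) ℂ)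
      map_add' := fun x y => Matrix.add_kronecker x y 1
      map_smul' := fun c x => by simpa using Matrix.smul_kronecker c x 1 }

/-- The coupled dynamics `φ_SE^t = exp (t (i·ad_h + i·λ·ad_v))` of the full system. -/
def phiSE {n m : ℕ} (h v : Matrix (Fin n × Fin m) (Fin n × Fin m) ℂ) (lam t : ℝ) :
    Matrix (Fin n × Fin m) (Fin n × Fin m) ℂ →L[ℂ] Matrix (Fin n × Fin m) (Fin n × Fin m) ℂ :=
  exp ((t : ℂ) • (Complex.I • adC h + ((Complex.I * lam : ℂ)) • adC v))

/-- The reduced one-step map `T(λ,τ) : x ↦ E_S (φ_SE^τ (x ⊗ 1))`. -/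
def Tred {n m : ℕ}
    (ES : Matrix (Fin n × Fin m) (Fin n × Fin m) ℂ →L[ℂ] Matrix (Fin n) (Fin n) ℂ)
    (h v : Matrix (Fin n × Fin m) (Fin n × Fin m) ℂ) (lam tau : ℝ) :
    Matrix (Fin n) (Fin n) ℂ →L[ℂ] Matrix (Fin n) (Fin n) ℂ :=
  ES ∘L phiSE h v lam tau ∘L inclS n m

/-- The free dynamics `α_S^t : x ↦ e^{i t h_S} x e^{−i t h_S}` of the small system, as a
continuous linear map. -/
def alphaS {n : ℕ} (hS : Matrix (Fin n) (Fin n) ℂ) (t : ℝ) :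
    Matrix (Fin n) (Fin n) ℂ →L[ℂ] Matrix (Fin n) (Fin n) ℂ :=
  LinearMap.toContinuousLinearMap
    ((LinearMap.mulRight ℂ (exp ((-(Complex.I * t) : ℂ) • hS))).comp
      (LinearMap.mulLeft ℂ (exp ((Complex.I * t : ℂ) • hS))))

/-- The free dynamics `α_SE^t : y ↦ e^{i t h} y e^{−i t h}` of the full system. -/
def alphaSE {N : Type*} [Fintype N] [DecidableEq N] (h : Matrix N N ℂ) (t : ℝ)
    (y : Matrix N N ℂ) : Matrix N N ℂ :=
  exp ((Complex.I * t : ℂ) • h) * y * exp ((-(Complex.I * t) : ℂ) • h)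

/-- A state on the matrix algebra: a normalized positive linear functional. -/
def IsState {n : ℕ} (ω : Matrix (Fin n) (Fin n) ℂ →ₗ[ℂ] ℂ) : Prop :=
  ω 1 = 1 ∧ ∀ x : Matrix (Fin n) (Fin n) ℂ, x.PosSemidef → 0 ≤ ω x

/-- Hypothesis (H1): there is a projection `p0` of the chain element, commuting with the
chain hamiltonian `h_E`, such that the interaction `v` is off-diagonal with respect to
`p0`. -/
def HypH1 {n m : ℕ} (hE : Matrix (Fin m) (Fin m) ℂ)
    (v : Matrix (Fin n × Fin m) (Fin n × Fin m) ℂ) : Prop :=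
  ∃ p0 : Matrix (Fin m) (Fin m) ℂ, p0.IsHermitian ∧ p0 * p0 = p0 ∧ p0 * hE = hE * p0 ∧
    v = ((1 : Matrix (Fin n) (Fin n) ℂ) ⊗ₖ p0) * v
          * ((1 : Matrix (Fin n) (Fin n) ℂ) ⊗ₖ (1 - p0))
      + ((1 : Matrix (Fin n) (Fin n) ℂ) ⊗ₖ (1 - p0)) * v
          * ((1 : Matrix (Fin n) (Fin n) ℂ) ⊗ₖ p0)

/-!
Let `p` be the projection of (H1), `w = 2p - 1` the associated self-inverse reflection and
`W = 1 ⊗ w`. Conjugation by `W` fixes `h`, since `w` commutes with `h_E`, and sends `v` to `-v`,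
since `v` is off-diagonal with respect to `p`. Hence it intertwines the generators of the coupled
dynamics at `λ` and `-λ`, and so `φ_SE^τ` at `-λ` is `φ_SE^τ` at `λ` conjugated by `W`. The
conjugation fixes every `x ⊗ 1`, and `E_S` does not see it because `w` commutes with the Gibbs
density and the trace is cyclic.
-/

namespace IsIdempotentElem

variable {R : Type*} [Ring R] {p : R}

theorem two_mul_sub_one_mul_self (hp : IsIdempotentElem p) : (2 * p - 1) * (2 * p - 1) = 1 := by
  have : (2 * p - 1) * (2 * p - 1) = 4 * (p * p - p) + 1 := by noncomm_ring
  rw [this, hp.eq, sub_self, mul_zero, zero_add]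

theorem two_mul_sub_one_conj_of_offDiag (hp : IsIdempotentElem p) {v : R}
    (hv : v = p * v * (1 - p) + (1 - p) * v * p) :
    (2 * p - 1) * v * (2 * p - 1) = -v := by
  have hup : (2 * p - 1) * p = p := by
    rw [sub_mul, mul_assoc, hp.eq, one_mul, two_mul, add_sub_cancel_right]
  have hpu : p * (2 * p - 1) = p := by
    rw [mul_sub, ← mul_assoc, (Commute.ofNat_right p 2).eq, mul_assoc, hp.eq, mul_one, two_mul,
      add_sub_cancel_right]
  have huq : (2 * p - 1) * (1 - p) = -(1 - p) := by rw [mul_sub, mul_one, hup]; noncomm_ring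
  have hqu : (1 - p) * (2 * p - 1) = -(1 - p) := by rw [sub_mul, one_mul, hpu]; noncomm_ring
  calc (2 * p - 1) * v * (2 * p - 1)
      = (2 * p - 1) * (p * v * (1 - p) + (1 - p) * v * p) * (2 * p - 1) := by rw [← hv]
    _ = (2 * p - 1) * p * v * ((1 - p) * (2 * p - 1))
        + (2 * p - 1) * (1 - p) * v * (p * (2 * p - 1)) := by noncomm_ring
    _ = -(p * v * (1 - p) + (1 - p) * v * p) := by rw [hup, hpu, huq, hqu]; noncomm_ring
    _ = -v := by rw [← hv]

end IsIdempotentElem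

theorem exp_conj_of_mul_self_eq_one {𝕂 𝔸 : Type*} [RCLike 𝕂] [NormedRing 𝔸] [NormedAlgebra 𝕂 𝔸]
    [CompleteSpace 𝔸] {u : 𝔸} (hu : u * u = 1) (x : 𝔸) : exp (u * x * u) = u * exp x * u := by
  let : NormedAlgebra ℚ 𝔸 := NormedAlgebra.restrictScalars ℚ 𝕂 𝔸
  exact exp_units_conj ⟨u, u, hu, hu⟩ x

namespace Matrix

variable {l m R : Type*} [Fintype l] [DecidableEq l] [Fintype m] [CommSemiring R]

variable (l) in
def oneKroneckerRingHom [DecidableEq m] : Matrix m m R →+* Matrix (l × m) (l × m) R where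
  toFun b := 1 ⊗ₖ b
  map_one' := one_kronecker_one
  map_mul' a b := by rw [← mul_kronecker_mul, one_mul]
  map_zero' := kronecker_zero 1
  map_add' := kronecker_add 1

theorem one_kronecker_conj_kronecker (w : Matrix m m R) (a : Matrix l l R) (b : Matrix m m R) :
    ((1 : Matrix l l R) ⊗ₖ w) * (a ⊗ₖ b) * (1 ⊗ₖ w) = a ⊗ₖ (w * b * w) := by
  rw [← mul_kronecker_mul, ← mul_kronecker_mul, one_mul, mul_one]

theorem one_kronecker_conj_of_offDiag {R : Type*} [CommRing R] [DecidableEq m]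
    {p : Matrix m m R} (hp : IsIdempotentElem p) {v : Matrix (l × m) (l × m) R}
    (hv : v = ((1 : Matrix l l R) ⊗ₖ p) * v * (1 ⊗ₖ (1 - p)) + (1 ⊗ₖ (1 - p)) * v * (1 ⊗ₖ p)) :
    ((1 : Matrix l l R) ⊗ₖ (2 * p - 1)) * v * (1 ⊗ₖ (2 * p - 1)) = -v := by
  let ι := oneKroneckerRingHom (R := R) (m := m) l
  have hq : (1 : Matrix l l R) ⊗ₖ (1 - p) = 1 - ι p := by rw [← map_one ι, ← map_sub]; rfl
  have hw : (1 : Matrix l l R) ⊗ₖ (2 * p - 1) = 2 * ι p - 1 := by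
    rw [← map_one ι, ← map_ofNat ι 2, ← map_mul, ← map_sub]; rfl
  rw [hq] at hv
  rw [hw]
  exact (hp.map ι).two_mul_sub_one_conj_of_offDiag hv

theorem linearMap_ext_kronecker {n p M : Type*} [DecidableEq m] [Fintype n] [DecidableEq n]
    [Fintype p] [DecidableEq p] [AddCommMonoid M] [Module R M]
    {f g : Matrix (l × n) (m × p) R →ₗ[R] M}
    (H : ∀ (A : Matrix l m R) (B : Matrix n p R), f (A ⊗ₖ B) = g (A ⊗ₖ B)) : f = g := by
  refine ext_linearMap R fun i j => LinearMap.ext_ring ?_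
  simpa [single_kronecker_single] using H (single i.1 j.1 1) (single i.2 j.2 1)

end Matrix

section Conjugation

variable {N : Type*} [Fintype N] [DecidableEq N] {W : Matrix N N ℂ}

def conjCLM (W : Matrix N N ℂ) : Matrix N N ℂ →L[ℂ] Matrix N N ℂ :=
  LinearMap.toContinuousLinearMap (LinearMap.mulLeftRight ℂ (W, W))

@[simp]
theorem conjCLM_apply (W x : Matrix N N ℂ) : conjCLM W x = W * x * W := rfl

theorem conjCLM_mul_self (hW : W * W = 1) : conjCLM W * conjCLM W = 1 := by
  ext1 x
  rw [mul_apply_eq_comp, conjCLM_apply, conjCLM_apply, one_apply_eq_self]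
  calc W * (W * x * W) * W = (W * W) * x * (W * W) := by noncomm_ring
    _ = x := by rw [hW, one_mul, mul_one]

theorem adC_apply (a x : Matrix N N ℂ) : adC a x = a * x - x * a := rfl

theorem adC_neg (a : Matrix N N ℂ) : adC (-a) = -adC a := by
  ext1 x
  simp only [adC_apply, neg_apply, neg_mul, mul_neg]
  abel

theorem conjCLM_comp_adC_comp_conjCLM (hW : W * W = 1) (a : Matrix N N ℂ) :
    (conjCLM W ∘L adC a) ∘L conjCLM W = adC (W * a * W) := by
  ext1 x
  simp only [ContinuousLinearMap.comp_apply, conjCLM_apply, adC_apply]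
  calc W * (a * (W * x * W) - W * x * W * a) * W
      = W * a * W * x * (W * W) - (W * W) * x * (W * a * W) := by noncomm_ring
    _ = W * a * W * x - x * (W * a * W) := by rw [hW, one_mul, mul_one]

end Conjugation

theorem phiSE_neg_coupling {n m : ℕ} {W h v : Matrix (Fin n × Fin m) (Fin n × Fin m) ℂ}
    (hW : W * W = 1) (hWh : W * h * W = h) (hWv : W * v * W = -v) (lam t : ℝ) :
    phiSE h v (-lam) t = conjCLM W * phiSE h v lam t * conjCLM W := by
  unfold phiSE
  refine .trans ?_ (exp_conj_of_mul_self_eq_one (𝕂 := ℂ) (u := conjCLM W) (conjCLM_mul_self hW) _)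
  congr 1
  simp only [ContinuousLinearMap.mul_def, ContinuousLinearMap.comp_smul,
    ContinuousLinearMap.smul_comp, ContinuousLinearMap.comp_add, ContinuousLinearMap.add_comp,
    conjCLM_comp_adC_comp_conjCLM hW, hWh, hWv, adC_neg, Complex.ofReal_neg, mul_neg, smul_neg]
  -- `neg_smul` does not match the scalar action on this operator space; compare pointwise
  ext1 x
  simp

theorem gibbsState_conj {m : ℕ} (β : ℝ) {hE w : Matrix (Fin m) (Fin m) ℂ} (hw : w * w = 1)
    (hwE : Commute w hE) (b : Matrix (Fin m) (Fin m) ℂ) :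
    gibbsState β hE (w * b * w) = gibbsState β hE b := by
  have hwG : Commute w (exp ((-β : ℂ) • hE)) := (hwE.smul_right _).exp_right
  rw [gibbsState, gibbsState, ← mul_assoc, ← mul_assoc, ← hwG.eq, Matrix.trace_mul_cycle,
    ← mul_assoc, hw, one_mul]

theorem comp_conjCLM_one_kronecker {n m : ℕ} {β : ℝ} {hE : Matrix (Fin m) (Fin m) ℂ}
    {ES : Matrix (Fin n × Fin m) (Fin n × Fin m) ℂ →L[ℂ] Matrix (Fin n) (Fin n) ℂ}
    (hES : ∀ (x : Matrix (Fin n) (Fin n) ℂ) (y : Matrix (Fin m) (Fin m) ℂ),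
      ES (x ⊗ₖ y) = gibbsState β hE y • x)
    {w : Matrix (Fin m) (Fin m) ℂ} (hw : w * w = 1) (hwE : Commute w hE) :
    ES ∘L conjCLM (1 ⊗ₖ w) = ES := by
  refine ContinuousLinearMap.coe_injective (Matrix.linearMap_ext_kronecker fun a b => ?_)
  simp only [ContinuousLinearMap.coe_coe, ContinuousLinearMap.comp_apply, conjCLM_apply,
    Matrix.one_kronecker_conj_kronecker, hES, gibbsState_conj β hw hwE]

theorem conjCLM_one_kronecker_comp_inclS {n m : ℕ} {w : Matrix (Fin m) (Fin m) ℂ}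
    (hw : w * w = 1) : conjCLM (1 ⊗ₖ w) ∘L inclS n m = inclS n m := by
  ext1 x
  simp only [ContinuousLinearMap.comp_apply, conjCLM_apply]
  exact (Matrix.one_kronecker_conj_kronecker w x 1).trans (by rw [mul_one, hw]; rfl)

theorem Tred_even_in_coupling_general
    (n m : ℕ) (β : ℝ)
    (hS : Matrix (Fin n) (Fin n) ℂ)
    (hE : Matrix (Fin m) (Fin m) ℂ)
    (h : Matrix (Fin n × Fin m) (Fin n × Fin m) ℂ)
    (hdef : h = hS ⊗ₖ (1 : Matrix (Fin m) (Fin m) ℂ)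
      + (1 : Matrix (Fin n) (Fin n) ℂ) ⊗ₖ hE)
    (v : Matrix (Fin n × Fin m) (Fin n × Fin m) ℂ)
    (hH1 : HypH1 hE v)
    (ES : Matrix (Fin n × Fin m) (Fin n × Fin m) ℂ →L[ℂ] Matrix (Fin n) (Fin n) ℂ)
    (hES : ∀ (x : Matrix (Fin n) (Fin n) ℂ) (y : Matrix (Fin m) (Fin m) ℂ),
      ES (x ⊗ₖ y) = gibbsState β hE y • x)
    (lam τ : ℝ) :
    Tred ES h v (-lam) τ = Tred ES h v lam τ := by
  obtain ⟨p, -, hp, hpE, hv⟩ := hH1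
  set w := 2 * p - 1
  have hw : w * w = 1 := IsIdempotentElem.two_mul_sub_one_mul_self hp
  have hwE : Commute w hE := ((Commute.ofNat_left 2 hE).mul_left hpE).sub_left (.one_left hE)
  set W := (1 : Matrix (Fin n) (Fin n) ℂ) ⊗ₖ w
  have hWW : W * W = 1 := by rw [← Matrix.mul_kronecker_mul, one_mul, hw, Matrix.one_kronecker_one]
  have hWh : W * h * W = h := by
    rw [hdef, mul_add, add_mul, Matrix.one_kronecker_conj_kronecker,
      Matrix.one_kronecker_conj_kronecker, mul_one, hw, hwE.eq, mul_assoc, hw, mul_one]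
  have hWv : W * v * W = -v := Matrix.one_kronecker_conj_of_offDiag hp hv
  calc Tred ES h v (-lam) τ
      = (ES ∘L conjCLM W) ∘L phiSE h v lam τ ∘L conjCLM W ∘L inclS n m := by
        rw [Tred, phiSE_neg_coupling hWW hWh hWv]; rfl
    _ = Tred ES h v lam τ := by
        rw [comp_conjCLM_one_kronecker hES hw hwE, conjCLM_one_kronecker_comp_inclS hw, Tred]

/-- **Evenness of `T(λ,τ)` in the coupling constant.**  Under Hypothesis (H1),
`T(−λ,τ) = T(λ,τ)` for all `λ ∈ ℝ` and `τ > 0`. -/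
theorem Tred_even_in_coupling
    (n m : ℕ) (hn : 0 < n) (hm : 0 < m) (β : ℝ) (hβ : 0 < β)
    (hS : Matrix (Fin n) (Fin n) ℂ) (hhS : hS.IsHermitian)
    (hE : Matrix (Fin m) (Fin m) ℂ) (hhE : hE.IsHermitian)
    (h : Matrix (Fin n × Fin m) (Fin n × Fin m) ℂ)
    (hdef : h = hS ⊗ₖ (1 : Matrix (Fin m) (Fin m) ℂ)
      + (1 : Matrix (Fin n) (Fin n) ℂ) ⊗ₖ hE)
    (v : Matrix (Fin n × Fin m) (Fin n × Fin m) ℂ) (hv : v.IsHermitian)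
    (hH1 : HypH1 hE v)
    (ES : Matrix (Fin n × Fin m) (Fin n × Fin m) ℂ →L[ℂ] Matrix (Fin n) (Fin n) ℂ)
    (hES : ∀ (x : Matrix (Fin n) (Fin n) ℂ) (y : Matrix (Fin m) (Fin m) ℂ),
      ES (x ⊗ₖ y) = gibbsState β hE y • x)
    (lam τ : ℝ) (hτ : 0 < τ) :
    Tred ES h v (-lam) τ = Tred ES h v lam τ :=
  Tred_even_in_coupling_general n m β hS hE h hdef v hH1 ES hES lam τ
end
end

section
/- Let d ≥ 1, ε0 > 0, and let T : (−ε0, ε0) → M_d(ℂ) be real-analytic with 1 ∈ spec T(ε) and ‖T(ε)‖ = 1 (ℓ²-operator norm) for all ε. Suppose that for every ε ∈ (0, ε0) the limit P(ε) := lim_{k→∞} T(ε)^k exists. Let P0 be the spectral projection of T(0) for the eigenvalue 1, i.e. the unique idempotent commuting with T(0) whose range is the generalized eigenspace ker (T(0) − 1)^d and such that T(0) − 1 restricted to ker P0 is invertible. Then: (1) 0 ∈ spec( P0 T'(0) P0 ), where T'(0) is the derivative of T at 0; and (2) if Q is the spectral projection of P0 T'(0) P0 for the eigenvalue 0 (characterized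 in the same way), then P0·Q = Q·P0. -/
open Filter Topology
open scoped Matrix.Norms.L2Operator

/-!
If `P0` is singular then so is `P0 T'(0) P0`. Otherwise `P0 = 1`, so `T(0) - 1` is nilpotent, and a
unipotent contraction is the identity: for `N = T(0) - 1` with `N^(j+2) = 0` one has
`N^j T(0)^k = N^j + k N^(j+1)`, which stays bounded only if `N^(j+1) = 0`. Hence `T(0) = 1`, the
difference quotients `(T(ε) - T(0)) / ε` are singular, and so is their limit `T'(0)` because the
non-units form a closed set.

For the commutation, `S = P0 T'(0) P0` satisfies `P0 S = S = S P0`. So `P0` fixes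
`ker Q ⊆ range S` pointwise and maps `range Q = ker S^d` into itself, and an idempotent commutes
with every operator that leaves its range and kernel invariant.
-/

theorem eq_zero_of_forall_norm_nsmul_le {E : Type*} [NormedAddCommGroup E] [NormedSpace ℝ E]
    {x : E} {C : ℝ} (h : ∀ k : ℕ, ‖k • x‖ ≤ C) : x = 0 := by
  by_contra hx
  have hpos : 0 < ‖x‖ := norm_pos_iff.2 hx
  obtain ⟨k, hk⟩ := exists_nat_gt (C / ‖x‖)
  have hkx := h k
  rw [RCLike.norm_nsmul ℝ, nsmul_eq_mul] at hkx
  rw [div_lt_iff₀ hpos] at hk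
  linarith

section Unipotent

variable {A : Type*} [NormedRing A] [NormedSpace ℝ A] {T : A}

theorem sub_one_pow_succ_eq_zero_of_norm_le_one (hT : ‖T‖ ≤ 1) {j : ℕ}
    (hj : (T - 1) ^ (j + 2) = 0) : (T - 1) ^ (j + 1) = 0 := by
  set N := T - 1 with hN
  have hpow : ∀ k : ℕ, N ^ j * T ^ k = N ^ j + k • N ^ (j + 1) := by
    intro k
    induction k with
    | zero => simp
    | succ k ih =>
      rw [pow_succ, ← mul_assoc, ih, show T = N + 1 by rw [hN, sub_add_cancel]]
      simp only [mul_add, add_mul, mul_one, smul_mul_assoc, ← pow_succ, hj, smul_zero, succ_nsmul]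
      abel
  have hbound : ∀ k : ℕ, ‖N ^ j * T ^ k‖ ≤ ‖N ^ j‖ := by
    rintro (_ | k)
    · simp
    · calc ‖N ^ j * T ^ (k + 1)‖ ≤ ‖N ^ j‖ * ‖T ^ (k + 1)‖ := norm_mul_le _ _
        _ ≤ ‖N ^ j‖ * 1 := by
          gcongr
          exact (norm_pow_le' T k.succ_pos).trans (pow_le_one₀ (norm_nonneg T) hT)
        _ = ‖N ^ j‖ := mul_one _
  refine eq_zero_of_forall_norm_nsmul_le (C := 2 * ‖N ^ j‖) fun k => ?_
  calc ‖k • N ^ (j + 1)‖ = ‖N ^ j * T ^ k - N ^ j‖ := by rw [hpow, add_sub_cancel_left]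
    _ ≤ ‖N ^ j * T ^ k‖ + ‖N ^ j‖ := norm_sub_le _ _
    _ ≤ 2 * ‖N ^ j‖ := by linarith [hbound k]

theorem eq_one_of_isNilpotent_sub_one_of_norm_le_one (hT : ‖T‖ ≤ 1)
    (hnil : IsNilpotent (T - 1)) : T = 1 := by
  obtain ⟨n, hn⟩ := hnil
  suffices ∀ m, (T - 1) ^ (m + 1) = 0 → T - 1 = 0 from
    sub_eq_zero.1 (this n (by rw [pow_succ, hn, zero_mul]))
  intro m
  induction m with
  | zero => simp
  | succ m ih => exact fun h => ih (sub_one_pow_succ_eq_zero_of_norm_le_one hT h)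

end Unipotent

theorem not_isUnit_of_hasDerivAt_of_not_isUnit_sub {A : Type*} [NormedRing A]
    [NormedAlgebra ℝ A] [HasSummableGeomSeries A] {f : ℝ → A} {f' : A} {x : ℝ}
    (hf : HasDerivAt f f' x) (h : ∀ᶠ y in 𝓝[≠] x, ¬IsUnit (f y - f x)) : ¬IsUnit f' := by
  refine nonunits.isClosed.mem_of_tendsto hf.tendsto_slope ?_
  filter_upwards [h, self_mem_nhdsWithin] with y hy hne
  rw [slope_def_module, ← Units.smul_mk0 (inv_ne_zero (sub_ne_zero.2 hne)), mem_nonunits_iff,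
    isUnit_smul_iff]
  exact hy

open LinearMap in
theorem Module.End.commute_of_range_eq_ker_pow_of_ker_le_range {R M : Type*} [Ring R]
    [AddCommGroup M] [Module R M] {p q s : Module.End R M} (hq : IsIdempotentElem q)
    (hps : p * s = s) (hsp : s * p = s) {k : ℕ} (hrange : range q = ker (s ^ k))
    (hker : ker q ≤ range s) : Commute q p := by
  refine (IsIdempotentElem.commute_iff hq).2 ⟨?_, fun x hx => ?_⟩
  · rw [hrange]
    intro x hx
    simp only [Submodule.mem_comap, LinearMap.mem_ker] at hx ⊢
    cases k with
    | zero =>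
      rw [pow_zero, Module.End.one_apply] at hx ⊢
      rw [hx, map_zero]
    | succ k => rwa [← Module.End.mul_apply, pow_succ, mul_assoc, hsp, ← pow_succ]
  · obtain ⟨w, rfl⟩ := hker hx
    simpa only [Submodule.mem_comap, ← Module.End.mul_apply, hps] using hx

open LinearMap in
theorem Matrix.commute_of_range_eq_ker_pow_of_ker_le_range {n R : Type*} [Fintype n]
    [DecidableEq n] [CommRing R] {P Q S : Matrix n n R} (hQ : IsIdempotentElem Q)
    (hPS : P * S = S) (hSP : S * P = S) {k : ℕ}
    (hrange : range Q.mulVecLin = ker (S.mulVecLin ^ k))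
    (hker : ker Q.mulVecLin ≤ range S.mulVecLin) : Commute Q P := by
  have h := Module.End.commute_of_range_eq_ker_pow_of_ker_le_range
    (p := Matrix.toLinAlgEquiv' P) (s := Matrix.toLinAlgEquiv' S) (hQ.map Matrix.toLinAlgEquiv')
    (by rw [← map_mul, hPS]) (by rw [← map_mul, hSP]) hrange hker
  simpa using h.map Matrix.toLinAlgEquiv'.symm

theorem analytic_perturbation_spectral_projection_part1_general
    (d : ℕ) (ε0 : ℝ) (hε0 : 0 < ε0)
    (T : ℝ → Matrix (Fin d) (Fin d) ℂ)
    (hT : AnalyticOnNhd ℝ T (Set.Ioo (-ε0) ε0))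
    (hspec : ∀ ε ∈ Set.Ioo (-ε0) ε0, (1 : ℂ) ∈ spectrum ℂ (T ε))
    (hnorm : ∀ ε ∈ Set.Ioo (-ε0) ε0, ‖T ε‖ = 1)
    -- `P0` is the spectral projection of `T 0` for the eigenvalue `1`:
    (P0 : Matrix (Fin d) (Fin d) ℂ)
    (hP0idem : P0 * P0 = P0)
    (hP0range : LinearMap.range P0.mulVecLin = LinearMap.ker ((T 0 - 1).mulVecLin ^ d))
    -- `Q` is the spectral projection of `P0 * T'(0) * P0` for the eigenvalue `0`:
    (Q : Matrix (Fin d) (Fin d) ℂ)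
    (hQidem : Q * Q = Q)
    (hQrange : LinearMap.range Q.mulVecLin =
      LinearMap.ker ((P0 * deriv T 0 * P0).mulVecLin ^ d))
    (hQinv : ∀ y ∈ LinearMap.ker Q.mulVecLin,
      ∃! w, w ∈ LinearMap.ker Q.mulVecLin ∧ (P0 * deriv T 0 * P0).mulVecLin w = y) :
    (0 : ℂ) ∈ spectrum ℂ (P0 * deriv T 0 * P0) ∧ P0 * Q = Q * P0 := by
  have h0 : Set.Ioo (-ε0) ε0 ∈ 𝓝 0 := Ioo_mem_nhds (neg_lt_zero.2 hε0) hε0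
  refine ⟨(spectrum.zero_mem_iff ℂ).2 ?_, ?_⟩
  · by_cases hP0 : IsUnit P0
    · obtain rfl : P0 = 1 := (IsIdempotentElem.iff_eq_one_of_isUnit hP0).1 hP0idem
      have hT0 : T 0 = 1 := by
        refine eq_one_of_isNilpotent_sub_one_of_norm_le_one (hnorm 0 (mem_of_mem_nhds h0)).le
          ((Matrix.isNilpotent_toLin'_iff _).1 ⟨d, LinearMap.ker_eq_top.1 ?_⟩)
        exact hP0range.symm.trans (by rw [Matrix.mulVecLin_one, LinearMap.range_id])
      rw [one_mul, mul_one]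
      refine not_isUnit_of_hasDerivAt_of_not_isUnit_sub
        (hT 0 (mem_of_mem_nhds h0)).differentiableAt.hasDerivAt ?_
      filter_upwards [nhdsWithin_le_nhds h0] with ε hε
      rw [hT0, ← IsUnit.neg_iff, neg_sub]
      exact hspec ε hε
    · exact fun h => hP0 (isUnit_of_mul_isUnit_left (isUnit_of_mul_isUnit_left h))
  · set S := P0 * deriv T 0 * P0
    have hPS : P0 * S = S := by simp only [S, ← mul_assoc, hP0idem]
    have hSP : S * P0 = S := by simp only [S, mul_assoc, hP0idem]
    have hker : LinearMap.ker Q.mulVecLin ≤ LinearMap.range S.mulVecLin := fun y hy =>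
      let ⟨w, ⟨_, hw⟩, _⟩ := hQinv y hy; ⟨w, hw⟩
    exact (Matrix.commute_of_range_eq_ker_pow_of_ker_le_range hQidem hPS hSP hQrange hker).eq.symm

/-- **Analytic perturbation of a power-convergent matrix family, part 1.**
Let `T : (−ε0, ε0) → M_d(ℂ)` be real-analytic with `1 ∈ spec T(ε)` and `‖T(ε)‖ = 1`, and
suppose `T(ε)^k` converges as `k → ∞` for each `ε ∈ (0, ε0)`.  Let `P0` be the spectral
projection of `T(0)` at the eigenvalue `1` (idempotent, commuting with `T(0)`, range the
generalized eigenspace `ker (T(0)−1)^d`, with `T(0)−1` invertible on `ker P0`).  Then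
(1) `0 ∈ spec (P0 T'(0) P0)`, and (2) if `Q` is the spectral projection of `P0 T'(0) P0`
at the eigenvalue `0`, then `P0 Q = Q P0`. -/
theorem analytic_perturbation_spectral_projection_part1
    (d : ℕ) (hd : 1 ≤ d) (ε0 : ℝ) (hε0 : 0 < ε0)
    (T : ℝ → Matrix (Fin d) (Fin d) ℂ)
    (hT : AnalyticOnNhd ℝ T (Set.Ioo (-ε0) ε0))
    (hspec : ∀ ε ∈ Set.Ioo (-ε0) ε0, (1 : ℂ) ∈ spectrum ℂ (T ε))
    (hnorm : ∀ ε ∈ Set.Ioo (-ε0) ε0, ‖T ε‖ = 1)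
    (P : ℝ → Matrix (Fin d) (Fin d) ℂ)
    (hconv : ∀ ε ∈ Set.Ioo (0:ℝ) ε0, Tendsto (fun k : ℕ => T ε ^ k) atTop (𝓝 (P ε)))
    -- `P0` is the spectral projection of `T 0` for the eigenvalue `1`:
    (P0 : Matrix (Fin d) (Fin d) ℂ)
    (hP0idem : P0 * P0 = P0)
    (hP0comm : T 0 * P0 = P0 * T 0)
    (hP0range : LinearMap.range P0.mulVecLin = LinearMap.ker ((T 0 - 1).mulVecLin ^ d))
    (hP0inv : ∀ y ∈ LinearMap.ker P0.mulVecLin,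
      ∃! w, w ∈ LinearMap.ker P0.mulVecLin ∧ (T 0 - 1).mulVecLin w = y)
    -- `Q` is the spectral projection of `P0 * T'(0) * P0` for the eigenvalue `0`:
    (Q : Matrix (Fin d) (Fin d) ℂ)
    (hQidem : Q * Q = Q)
    (hQcomm : (P0 * deriv T 0 * P0) * Q = Q * (P0 * deriv T 0 * P0))
    (hQrange : LinearMap.range Q.mulVecLin =
      LinearMap.ker ((P0 * deriv T 0 * P0).mulVecLin ^ d))
    (hQinv : ∀ y ∈ LinearMap.ker Q.mulVecLin,
      ∃! w, w ∈ LinearMap.ker Q.mulVecLin ∧ (P0 * deriv T 0 * P0).mulVecLin w = y) :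
    (0 : ℂ) ∈ spectrum ℂ (P0 * deriv T 0 * P0) ∧ P0 * Q = Q * P0 :=
  analytic_perturbation_spectral_projection_part1_general d ε0 hε0 T hT hspec hnorm P0 hP0idem
    hP0range Q hQidem hQrange hQinv
end
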